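/- Contrapositive model-rejection criterion: Let A ∈ ℝ^{m×n}, b ∈ ℝ^m, Ã ∈ ℝ^{m×n}, b̃ ∈ ℝ^m. If σ_{n+1}([Ã, b̃]) > ‖Ã − A‖ + ‖b̃ − b‖, then the linear system A κ = b has no solution. -/

import Mathlib

/-! If `A κ = b` is solvable then `[A, b]` has rank at most `n`, so by the definition of
`σ_{n+1}` as a distance to matrices of rank `≤ n`, `σ_{n+1}([Ã, b̃]) ≤ ‖[Ã, b̃] - [A, b]‖`.
The latter is `‖[Ã - A, b̃ - b]‖ ≤ ‖Ã - A‖ + ‖b̃ - b‖` by the triangle inequality applied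
column block by column block. -/

/-- Spectral (operator) norm of a real matrix, w.r.t. Euclidean norms. -/
noncomputable def specNorm {m n : ℕ} (A : Matrix (Fin m) (Fin n) ℝ) : ℝ :=
  ‖LinearMap.toContinuousLinearMap (Matrix.toEuclideanLin A)‖

/-- The `k`-th largest singular value (1-indexed), characterized via best low-rank
approximation (Eckart–Young): `σ_k(A) = inf { ‖A - B‖ : rank B < k }`.
This convention automatically extends the singular values by zero beyond `min m n`. -/
noncomputable def sv {m n : ℕ} (A : Matrix (Fin m) (Fin n) ℝ) (k : ℕ) : ℝ :=
  sInf { c | ∃ B : Matrix (Fin m) (Fin n) ℝ, B.rank < k ∧ c = specNorm (A - B) }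


/-- The augmented matrix `[A, b]` obtained by appending the column `b` to `A`. -/
def aug {m n : ℕ} (A : Matrix (Fin m) (Fin n) ℝ) (b : Fin m → ℝ) :
    Matrix (Fin m) (Fin (n + 1)) ℝ :=
  Matrix.of fun i => Fin.snoc (A i) (b i)

/-- Euclidean norm of a vector. -/
noncomputable def vecNorm {m : ℕ} (b : Fin m → ℝ) : ℝ := Real.sqrt (∑ i, b i ^ 2)

open Matrix WithLp

lemma specNorm_nonneg {m n : ℕ} (A : Matrix (Fin m) (Fin n) ℝ) : 0 ≤ specNorm A :=
  norm_nonneg _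

lemma vecNorm_eq_norm_toLp {m : ℕ} (b : Fin m → ℝ) : vecNorm b = ‖toLp 2 b‖ := by
  simp [vecNorm, EuclideanSpace.norm_eq]

lemma vecNorm_nonneg {m : ℕ} (b : Fin m → ℝ) : 0 ≤ vecNorm b := Real.sqrt_nonneg _

lemma norm_toEuclideanLin_le {m n : ℕ} (A : Matrix (Fin m) (Fin n) ℝ)
    (x : EuclideanSpace ℝ (Fin n)) : ‖toEuclideanLin A x‖ ≤ specNorm A * ‖x‖ :=
  (LinearMap.toContinuousLinearMap (toEuclideanLin A)).le_opNorm x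

lemma sv_le_specNorm_sub {m n k : ℕ} (A : Matrix (Fin m) (Fin n) ℝ)
    {B : Matrix (Fin m) (Fin n) ℝ} (hB : B.rank < k) : sv A k ≤ specNorm (A - B) :=
  csInf_le ⟨0, by rintro c ⟨B', -, rfl⟩; exact specNorm_nonneg _⟩ ⟨B, hB, rfl⟩

lemma norm_toLp_init_le {n : ℕ} (x : EuclideanSpace ℝ (Fin (n + 1))) :
    ‖toLp 2 (Fin.init (ofLp x))‖ ≤ ‖x‖ := by
  simp only [EuclideanSpace.norm_eq, Fin.sum_univ_castSucc (fun i => ‖x i‖ ^ 2)]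
  gcongr
  exact le_add_of_nonneg_right (sq_nonneg _)

lemma aug_mulVec {m n : ℕ} (A : Matrix (Fin m) (Fin n) ℝ) (b : Fin m → ℝ)
    (v : Fin (n + 1) → ℝ) : aug A b *ᵥ v = A *ᵥ Fin.init v + v (Fin.last n) • b := by
  funext i
  simp [mulVec, dotProduct, aug, Fin.sum_univ_castSucc, Fin.init, mul_comm]

lemma aug_sub {m n : ℕ} (A A' : Matrix (Fin m) (Fin n) ℝ) (b b' : Fin m → ℝ) :
    aug A b - aug A' b' = aug (A - A') (b - b') := by
  funext i j
  refine Fin.lastCases ?_ (fun j => ?_) j <;> simp [aug]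

lemma rank_aug_le_of_mulVec_eq {m n : ℕ} {A : Matrix (Fin m) (Fin n) ℝ} {b : Fin m → ℝ}
    {κ : Fin n → ℝ} (hκ : A *ᵥ κ = b) : (aug A b).rank ≤ n := by
  have hrange : LinearMap.range (aug A b).mulVecLin ≤ LinearMap.range A.mulVecLin := by
    rintro _ ⟨v, rfl⟩
    refine ⟨Fin.init v + v (Fin.last n) • κ, ?_⟩
    simp only [mulVecLin_apply, aug_mulVec, ← hκ, mulVec_add, mulVec_smul]
  exact (Submodule.finrank_mono hrange).trans A.rank_le_width

lemma specNorm_aug_le {m n : ℕ} (A : Matrix (Fin m) (Fin n) ℝ) (b : Fin m → ℝ) :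
    specNorm (aug A b) ≤ specNorm A + vecNorm b := by
  refine ContinuousLinearMap.opNorm_le_bound _
    (add_nonneg (specNorm_nonneg A) (vecNorm_nonneg b)) fun x => ?_
  have hsplit : toEuclideanLin (aug A b) x =
      toEuclideanLin A (toLp 2 (Fin.init (ofLp x))) + x (Fin.last n) • toLp 2 b := by
    ext i
    simp [aug_mulVec]
  calc ‖toEuclideanLin (aug A b) x‖
      ≤ ‖toEuclideanLin A (toLp 2 (Fin.init (ofLp x)))‖ + ‖x (Fin.last n)‖ * vecNorm b := by
        rw [hsplit, vecNorm_eq_norm_toLp, ← norm_smul]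
        exact norm_add_le _ _
    _ ≤ specNorm A * ‖x‖ + ‖x‖ * vecNorm b := by
        gcongr
        · exact (norm_toEuclideanLin_le A _).trans
            (mul_le_mul_of_nonneg_left (norm_toLp_init_le x) (specNorm_nonneg A))
        · exact vecNorm_nonneg b
        · exact PiLp.norm_apply_le x _
    _ = (specNorm A + vecNorm b) * ‖x‖ := by ring

theorem model_rejection {m n : ℕ} (A Atil : Matrix (Fin m) (Fin n) ℝ)
    (b btil : Fin m → ℝ)
    (h : sv (aug Atil btil) (n + 1) > specNorm (Atil - A) + vecNorm (btil - b)) :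
    ¬ ∃ κ : Fin n → ℝ, A.mulVec κ = b := by
  rintro ⟨κ, hκ⟩
  have hrank : (aug A b).rank < n + 1 := Nat.lt_succ_of_le (rank_aug_le_of_mulVec_eq hκ)
  have hsv : sv (aug Atil btil) (n + 1) ≤ specNorm (Atil - A) + vecNorm (btil - b) :=
    calc sv (aug Atil btil) (n + 1) ≤ specNorm (aug Atil btil - aug A b) :=
          sv_le_specNorm_sub _ hrank
      _ = specNorm (aug (Atil - A) (btil - b)) := by rw [aug_sub]
      _ ≤ specNorm (Atil - A) + vecNorm (btil - b) := specNorm_aug_le _ _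
  exact hsv.not_gt h
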